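/- For every t∈[0,T], the map z ↦ w(t,z) is non-decreasing and convex on (0,∞), with lim_{z→∞} w(t,z) = +∞. Moreover the limit at zero satisfies: lim_{z↓0} w(t,z) = ∫_0^{t*−t} e^{−cs}·_s p_t·f(t+s) ds for t∈[0,t*), and lim_{z↓0} w(t,z) = 0 for t∈[t*,T]. -/

import Mathlib

open MeasureTheory ProbabilityTheory Filter Set
open scoped ENNReal

noncomputable section

/-- The setting of De Angelis–Milazzo–Stabile: a probability space carrying a
Brownian motion `W` with filtration `F`, market/contract parameters, a penalty
function `k` and a mortality force `mu` satisfying Assumption 1 of the paper. -/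
structure VASetting (Ω : Type*) [mΩ : MeasurableSpace Ω] where
  /-- the underlying probability measure `ℙ` -/
  P : Measure Ω
  probP : IsProbabilityMeasure P
  /-- the filtration generated by the Brownian motion -/
  F : Filtration ℝ mΩ
  /-- the driving Brownian motion -/
  W : ℝ → Ω → ℝ
  T : ℝ
  sigma : ℝ
  r : ℝ
  c : ℝ
  g : ℝ
  lam : ℝ
  /-- the penalty (surrender charge) function -/
  k : ℝ → ℝ
  /-- the mortality force -/
  mu : ℝ → ℝ
  hT : 0 < T
  hsigma : 0 < sigma
  hr : 0 ≤ r
  hc : 0 ≤ c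
  hg : 0 ≤ g
  hlam : 0 ≤ lam
  -- `W` is a standard Brownian motion for the filtration `F`
  hW0 : ∀ ω, W 0 ω = 0
  hWcont : ∀ ω, Continuous fun s => W s ω
  hWmeas : ∀ s, Measurable (W s)
  hWadapted : Adapted F W
  hWgauss : ∀ s t : ℝ, 0 ≤ s → s ≤ t →
    Measure.map (fun ω => W t ω - W s ω) P = gaussianReal 0 (Real.toNNReal (t - s))
  hWindep : ∀ s t : ℝ, 0 ≤ s → s ≤ t →
    Indep (MeasurableSpace.comap (fun ω => W t ω - W s ω) inferInstance) (F s) P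
  -- Assumption 1 of the paper
  hk_mono : AntitoneOn k (Icc 0 T)
  hk_smooth : ContDiffOn ℝ 2 k (Icc 0 T)
  hkT : k T = 0
  hmu_nonneg : ∀ t, 0 ≤ t → 0 ≤ mu t
  hmu_smooth : ContDiffOn ℝ 1 mu (Ici 0)
  hmu_growth : ∀ t, 0 ≤ t → deriv mu t ≤ lam * mu t

namespace VASetting

variable {Ω : Type*} [mΩ : MeasurableSpace Ω] (S : VASetting Ω)

/-- `α := g + c − r`. -/
def alpha : ℝ := S.g + S.c - S.r

/-- The geometric Brownian motion `Z^z_s = z·exp((α−σ²/2)s + σW_s)`. -/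
def Z (z s : ℝ) (ω : Ω) : ℝ :=
  z * Real.exp ((S.alpha - S.sigma ^ 2 / 2) * s + S.sigma * S.W s ω)

/-- The survival probability `_s p_t = exp(−∫_0^s μ(t+u) du)`. -/
def surv (t s : ℝ) : ℝ := Real.exp (-(∫ u in (0:ℝ)..s, S.mu (t + u)))

/-- `f(t) = k(t)(c+μ(t)) − k'(t) − c`. -/
def f (t : ℝ) : ℝ := S.k t * (S.c + S.mu t) - deriv S.k t - S.c

/-- `t* = inf{t ∈ [0,T) : f(t) < 0} ∧ T` (with `inf ∅ = ∞`). -/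
def tstar : ℝ := sInf ({t | t ∈ Ico (0:ℝ) S.T ∧ S.f t < 0} ∪ {S.T})

/-- Assumption 2 of the paper: `f` changes sign at most once, from `+` to `−`,
together with one of the two monotonicity conditions (i), (ii). -/
def Assumption2 : Prop :=
  (∀ t ∈ Icc (0:ℝ) S.tstar, 0 ≤ S.f t) ∧
  (∀ t ∈ Ioc S.tstar S.T, S.f t < 0) ∧
  ((∀ t ∈ Ioc S.tstar S.T, deriv S.mu t ≤ 0 ∧ deriv S.f t ≤ 0) ∨
   (∀ t ∈ Ioc S.tstar S.T, 0 < deriv S.mu t ∧ deriv S.f t - S.mu t * S.f t ≤ 0))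

/-- The payoff `𝒫_{t,z}(τ)`. -/
def payoff (t z : ℝ) (τ : Ω → ℝ) (ω : Ω) : ℝ :=
  (∫ s in (0:ℝ)..(τ ω),
    Real.exp (-S.c * s) * S.surv t s *
      (S.f (t + s) + S.mu (t + s) * max (S.Z z s ω - 1) 0)) +
  (if τ ω = S.T - t then
    Real.exp (-S.c * (S.T - t)) * S.surv t (S.T - t) * max (S.Z z (S.T - t) ω - 1) 0
  else 0)

/-- Admissible stopping times for the problem started at time `t`:
`F`-stopping times with values in `[0, T−t]`. -/
def isAdmissible (t : ℝ) (τ : Ω → ℝ) : Prop :=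
  IsStoppingTime S.F (fun ω => (τ ω : WithTop ℝ)) ∧ ∀ ω, τ ω ∈ Icc (0:ℝ) (S.T - t)

/-- The value function `w(t,z) = sup_{0≤τ≤T−t} E[𝒫_{t,z}(τ)]`. -/
def w (t z : ℝ) : ℝ :=
  sSup {x | ∃ τ : Ω → ℝ, S.isAdmissible t τ ∧ x = ∫ ω, S.payoff t z τ ω ∂S.P}

/-- The optimal stopping boundary `b(t) = inf{z>0 : w(t,z)>0}`. -/
def b (t : ℝ) : ℝ := sInf {z | 0 < z ∧ 0 < S.w t z}

/-- The boundary extended by its terminal value `b(T) := 1`. -/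
def bEx (t : ℝ) : ℝ := if t < S.T then S.b t else 1

/-- `H(t,z) = μ(t)(z−1)⁺ + f(t)`. -/
def H (t z : ℝ) : ℝ := S.mu t * max (z - 1) 0 + S.f t

/-- The optimal stopping time `τ*_{t,z} = inf{s ≥ 0 : Z^z_s ≤ b(t+s)} ∧ (T−t)`. -/
def tauStar (t z : ℝ) (ω : Ω) : ℝ :=
  sInf ({s | 0 ≤ s ∧ S.Z z s ω ≤ S.bEx (t + s)} ∪ {S.T - t})

/-- The hitting time of the interior,
`τ'_{t,z} = inf{s ≥ 0 : Z^z_s < b(t+s)} ∧ (T−t)`. -/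
def tauStrict (t z : ℝ) (ω : Ω) : ℝ :=
  sInf ({s | 0 ≤ s ∧ S.Z z s ω < S.bEx (t + s)} ∪ {S.T - t})

/-- The continuation region `𝒞`. -/
def Cset : Set (ℝ × ℝ) := {p | p.1 ∈ Ico (0:ℝ) S.T ∧ 0 < p.2 ∧ 0 < S.w p.1 p.2}

/-- The stopping region `𝒟`. -/
def Dset : Set (ℝ × ℝ) :=
  {p | p.1 ∈ Ico (0:ℝ) S.T ∧ 0 < p.2 ∧ S.w p.1 p.2 = 0} ∪ {p | p.1 = S.T ∧ 0 < p.2}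

/-- The log-normal transition density `Φ(z,s,y)` of `Z`. -/
def Phi (z s y : ℝ) : ℝ :=
  1 / (Real.sqrt (2 * Real.pi * S.sigma ^ 2 * s) * y) *
    Real.exp (-(Real.log (y / z) - (S.alpha - S.sigma ^ 2 / 2) * s) ^ 2 /
      (2 * S.sigma ^ 2 * s))

/-- `μ_M = max_{s ∈ [0,T]} μ(s)`. -/
def muMax : ℝ := sSup (S.mu '' Icc (0:ℝ) S.T)

/-- The level curve `b_δ(t) = inf{z>0 : w(t,z) > δ}`. -/
def bDelta (δ t : ℝ) : ℝ := sInf {z | 0 < z ∧ δ < S.w t z}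

/-- The quantity `Θ(t,z,ε)` of the paper. -/
def Theta (t z ε : ℝ) : ℝ :=
  (∫ ω, (if S.T - t - ε ≤ S.tauStar t z ω then
      Real.exp (-S.c * (S.T - t - ε)) * S.surv (t + ε) (S.T - t - ε) *
        max (S.Z z (S.T - t - ε) ω - 1) 0
    else 0) ∂S.P) -
  (∫ ω, (if S.tauStar t z ω = S.T - t then
      Real.exp (-S.c * (S.T - t)) * S.surv t (S.T - t) * max (S.Z z (S.T - t) ω - 1) 0
    else 0) ∂S.P)

/-- `ψ` solves the boundary integral equation on `Γ_ψ = {ψ > 0}`. -/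
def SolvesIntEq (ψ : ℝ → ℝ) : Prop :=
  ∀ t ∈ Ico (0:ℝ) S.T, 0 < ψ t →
    Real.exp (-S.c * (S.T - t)) * S.surv t (S.T - t) *
        (∫ ω, max (S.Z (ψ t) (S.T - t) ω - 1) 0 ∂S.P) +
      (∫ s in (0:ℝ)..(S.T - t),
        Real.exp (-S.c * s) * S.surv t s *
          (∫ ω, (if ψ (t + s) < S.Z (ψ t) s ω then S.H (t + s) (S.Z (ψ t) s ω) else 0)
            ∂S.P)) = 0

/-- The class `Σ` of candidate boundaries. -/
def SigmaClass (ψ : ℝ → ℝ) : Prop :=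
  (∀ t ∈ Icc (0:ℝ) S.T, 0 ≤ ψ t ∧ ψ t ≤ max (1 - S.f t / S.mu t) 0) ∧
  ∃ tψ ∈ Ico S.tstar S.T,
    (∀ t ∈ Ico (0:ℝ) tψ, ψ t = 0) ∧ ContinuousOn ψ (Icc tψ S.T) ∧ ψ S.T = 1

/-- The Brownian motion `W̃` driving the account value under the pricing
measure (`W_t = σt − W̃_t` as in the paper's Girsanov change of measure). -/
def Wtilde (s : ℝ) (ω : Ω) : ℝ := S.sigma * s - S.W s ω

/-- The account value process `X_s = x₀·exp((r−c−σ²/2)s + σW̃_s)`. -/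
def X (x0 s : ℝ) (ω : Ω) : ℝ :=
  x0 * Real.exp ((S.r - S.c - S.sigma ^ 2 / 2) * s + S.sigma * S.Wtilde s ω)

/-- The pricing (risk-neutral) measure `Q`, with `dQ = M_T^{-1} dP`. -/
def Q : Measure Ω :=
  S.P.withDensity fun ω =>
    ENNReal.ofReal (Real.exp (S.sigma * S.W S.T ω - S.sigma ^ 2 * S.T / 2))

/-- The optimal surrender boundary `ℓ_{x₀}(t) = x₀e^{gt}/b(t)` (with value `∞`
where `b(t) = 0`). -/
def ell (x0 t : ℝ) : ℝ≥0∞ :=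
  ENNReal.ofReal (x0 * Real.exp (S.g * t)) / ENNReal.ofReal (S.bEx t)

/-- The optimal surrender time `γ* = inf{s ∈ [0,T) : X_s ≥ ℓ_{x₀}(s)} ∧ T`. -/
def gammaStar (x0 : ℝ) (ω : Ω) : ℝ :=
  sInf ({s | s ∈ Ico (0:ℝ) S.T ∧ S.ell x0 s ≤ ENNReal.ofReal (S.X x0 s ω)} ∪ {S.T})

/-- The rational price of the VA at time zero, `V₀ = x₀·u(0,1)` where
`u(t,z) = w(t,z) + 1 − k(t)`. -/
def V0 (x0 : ℝ) : ℝ := x0 * (S.w 0 1 + 1 - S.k 0)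

end VASetting

/-!
For a fixed stopping time `τ` the payoff splits into the deterministic running gain
`∫₀^τ e^{-cs} ₛp_t f(t+s) ds` and a nonnegative combination of call payoffs `(z·Z¹_s − 1)⁺`, each
monotone and convex in `z`; expectations and the supremum over `τ` preserve both properties.
Stopping at `T − t` gives a lower bound that grows linearly in `z`. The option part is `O(|z|)`
uniformly in `τ`, while by Assumption 2 the running gain `u ↦ ∫₀^u …` increases up to `t* − t` and
decreases afterwards; so as `z → 0` the value tends to the running gain at the deterministic time
`(t* − t)⁺`.
-/

open Topology

section

variable {α : Type*} [MeasurableSpace α] {μ : Measure α}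

theorem monotone_ciSup {ι β γ : Type*} [Preorder β] [ConditionallyCompleteLattice γ]
    {f : ι → β → γ} (hf : ∀ i, Monotone (f i)) (hbdd : ∀ x, BddAbove (range fun i => f i x)) :
    Monotone fun x => ⨆ i, f i x :=
  fun _ y hxy => ciSup_mono (hbdd y) fun i => hf i hxy

theorem convexOn_ciSup {ι E : Type*} [Nonempty ι] [AddCommGroup E] [Module ℝ E] {s : Set E}
    {f : ι → E → ℝ} (hs : Convex ℝ s) (hf : ∀ i, ConvexOn ℝ s (f i))
    (hbdd : ∀ x ∈ s, BddAbove (range fun i => f i x)) :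
    ConvexOn ℝ s (fun x => ⨆ i, f i x) := by
  refine ⟨hs, fun x hx y hy a b ha hb hab => ciSup_le fun i => ?_⟩
  dsimp only
  calc f i (a • x + b • y) ≤ a • f i x + b • f i y := (hf i).2 hx hy ha hb hab
    _ ≤ a • (⨆ j, f j x) + b • ⨆ j, f j y :=
      add_le_add (smul_le_smul_of_nonneg_left (le_ciSup (hbdd x hx) i) ha)
        (smul_le_smul_of_nonneg_left (le_ciSup (hbdd y hy) i) hb)

theorem monotone_integral {β : Type*} [Preorder β] {F : β → α → ℝ}
    (hF : ∀ᵐ a ∂μ, Monotone fun x => F x a) (hint : ∀ x, Integrable (F x) μ) :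
    Monotone fun x => ∫ a, F x a ∂μ :=
  fun x y hxy => integral_mono_ae (hint x) (hint y) (hF.mono fun _ ha => ha hxy)

theorem convexOn_integral {E : Type*} [AddCommGroup E] [Module ℝ E] {s : Set E}
    {F : E → α → ℝ} (hs : Convex ℝ s) (hF : ∀ᵐ a ∂μ, ConvexOn ℝ s fun x => F x a)
    (hint : ∀ x ∈ s, Integrable (F x) μ) :
    ConvexOn ℝ s fun x => ∫ a, F x a ∂μ := by
  refine ⟨hs, fun x hx y hy a b ha hb hab => ?_⟩
  calc ∫ ω, F (a • x + b • y) ω ∂μ ≤ ∫ ω, (a • F x ω + b • F y ω) ∂μ :=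
        integral_mono_ae (hint _ (hs hx hy ha hb hab))
          (((hint x hx).smul a).add ((hint y hy).smul b))
          (hF.mono fun _ hω => hω.2 hx hy ha hb hab)
    _ = a • ∫ ω, F x ω ∂μ + b • ∫ ω, F y ω ∂μ := by
      rw [← integral_smul, ← integral_smul]
      exact integral_add ((hint x hx).smul a) ((hint y hy).smul b)

theorem convexOn_max_mul_sub_one (e : ℝ) : ConvexOn ℝ univ fun z : ℝ => max (z * e - 1) 0 := by
  refine ⟨convex_univ, fun x _ y _ a b ha hb hab => ?_⟩
  simp only [smul_eq_mul]
  refine max_le ?_ (by positivity)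
  calc (a * x + b * y) * e - 1 = a * (x * e - 1) + b * (y * e - 1) := by
        linear_combination hab
    _ ≤ a * max (x * e - 1) 0 + b * max (y * e - 1) 0 := by gcongr <;> exact le_max_left _ _

theorem monotone_max_mul_sub_one {e : ℝ} (he : 0 ≤ e) : Monotone fun z : ℝ => max (z * e - 1) 0 :=
  fun _ _ hxy => by dsimp only; gcongr

theorem max_mul_sub_one_le_abs_mul {e : ℝ} (he : 0 ≤ e) (z : ℝ) : max (z * e - 1) 0 ≤ |z| * e :=
  max_le (by nlinarith [le_abs_self z]) (by positivity)

end

namespace VASetting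

variable {Ω : Type*} [MeasurableSpace Ω] (S : VASetting Ω)

instance isProbabilityMeasure_P : IsProbabilityMeasure S.P := S.probP

theorem tstar_le_T : S.tstar ≤ S.T :=
  csInf_le ⟨0, by rintro x (hx | rfl); exacts [hx.1.1, S.hT.le]⟩ (Or.inr rfl)

theorem measurable_of_isAdmissible {t : ℝ} {τ : Ω → ℝ} (hτ : S.isAdmissible t τ) :
    Measurable τ :=
  measurable_of_Iic fun x => by
    have h := S.F.le x _ (hτ.1 x)
    simp only [WithTop.coe_le_coe] at h
    exact h

theorem isAdmissible_const {t u : ℝ} (hu : u ∈ Icc 0 (S.T - t)) :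
    S.isAdmissible t fun _ => u :=
  ⟨isStoppingTime_const S.F u, fun _ => hu⟩

theorem Z_eq_mul (z s : ℝ) (ω : Ω) : S.Z z s ω = z * S.Z 1 s ω := by
  simp only [Z, one_mul]

theorem Z_one_pos (s : ℝ) (ω : Ω) : 0 < S.Z 1 s ω := by
  simp only [Z, one_mul]; positivity

theorem continuous_Z (z : ℝ) (ω : Ω) : Continuous fun s => S.Z z s ω := by
  have := S.hWcont ω
  unfold Z; fun_prop

theorem measurable_Z (z s : ℝ) : Measurable (S.Z z s) := by
  have := S.hWmeas s
  unfold Z; fun_prop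

theorem measurable_Z_uncurry (z : ℝ) : Measurable fun p : Ω × ℝ => S.Z z p.2 p.1 :=
  (measurable_uncurry_of_continuous_of_measurable (S.continuous_Z z) (S.measurable_Z z)).comp
    measurable_swap

theorem map_W {s : ℝ} (hs : 0 ≤ s) : S.P.map (S.W s) = gaussianReal 0 s.toNNReal := by
  simpa [S.hW0] using S.hWgauss 0 s le_rfl hs

theorem integrable_Z {s : ℝ} (hs : 0 ≤ s) (z : ℝ) : Integrable (S.Z z s) S.P := by
  have h : Integrable (fun ω => Real.exp (S.sigma * S.W s ω)) S.P := by
    rw [← mgf_pos_iff, mgf_gaussianReal (S.map_W hs)]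
    positivity
  convert h.const_mul (z * Real.exp ((S.alpha - S.sigma ^ 2 / 2) * s)) using 2
  rw [Z, mul_assoc, ← Real.exp_add]

theorem integral_Z {s : ℝ} (hs : 0 ≤ s) (z : ℝ) :
    ∫ ω, S.Z z s ω ∂S.P = z * Real.exp (S.alpha * s) := by
  have h : ∫ ω, Real.exp (S.sigma * S.W s ω) ∂S.P = Real.exp (s * S.sigma ^ 2 / 2) := by
    simpa [mgf, Real.coe_toNNReal _ hs] using mgf_gaussianReal (S.map_W hs) S.sigma
  simp only [Z, Real.exp_add, ← mul_assoc]
  rw [integral_const_mul, h, mul_assoc, ← Real.exp_add]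
  ring_nf

theorem integrable_setIntegral_Z (b : ℝ) :
    Integrable (fun ω => ∫ s in Ioc 0 b, S.Z 1 s ω) S.P := by
  have hmeas := (S.measurable_Z_uncurry 1).aestronglyMeasurable
    (μ := S.P.prod (volume.restrict (Ioc 0 b)))
  refine ((integrable_prod_iff' hmeas).2 ⟨?_, ?_⟩).integral_prod_left
  · filter_upwards [ae_restrict_mem measurableSet_Ioc] with s hs
    exact S.integrable_Z hs.1.le 1
  · have hexp : Continuous fun s => Real.exp (S.alpha * s) := by fun_prop
    refine hexp.integrableOn_Ioc.congr ?_
    filter_upwards [ae_restrict_mem measurableSet_Ioc] with s hs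
    simp only [Real.norm_of_nonneg (S.Z_one_pos s _).le, S.integral_Z hs.1.le, one_mul]

/- `μ` is only controlled on `[0, ∞)` and `deriv k` is junk at the endpoints of `[0, T]`, where `k`
is only one-sidedly differentiable. `muExt`, `fExt` and `survExt` are continuous functions on `ℝ`
that agree with `μ`, `f` and `_s p_t` wherever the payoff evaluates them (up to null sets). -/

def muExt (x : ℝ) : ℝ := S.mu (max 0 x)

def fExt (x : ℝ) : ℝ :=
  S.k (projIcc 0 S.T S.hT.le x) * (S.c + S.muExt x) -
    derivWithin S.k (Icc 0 S.T) (projIcc 0 S.T S.hT.le x) - S.c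

def survExt (t s : ℝ) : ℝ := Real.exp (-∫ u in (0:ℝ)..s, S.muExt (t + u))

def discount (t s : ℝ) : ℝ := Real.exp (-S.c * s) * S.survExt t s

def deathDensity (t s : ℝ) : ℝ := S.discount t s * S.muExt (t + s)

theorem continuous_muExt : Continuous S.muExt :=
  S.hmu_smooth.continuousOn.comp_continuous (continuous_const.max continuous_id)
    fun _ => mem_Ici.2 (le_max_left _ _)

theorem muExt_nonneg (x : ℝ) : 0 ≤ S.muExt x := S.hmu_nonneg _ (le_max_left _ _)

theorem muExt_of_nonneg {x : ℝ} (hx : 0 ≤ x) : S.muExt x = S.mu x := by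
  rw [muExt, max_eq_right hx]

theorem continuous_fExt : Continuous S.fExt := by
  have hk := S.hk_smooth.continuousOn.domRestrict.comp (continuous_projIcc (h := S.hT.le))
  have hk' := (S.hk_smooth.continuousOn_derivWithin (uniqueDiffOn_Icc S.hT)
    one_le_two).domRestrict.comp (continuous_projIcc (h := S.hT.le))
  exact ((hk.mul (continuous_const.add S.continuous_muExt)).sub hk').sub continuous_const

theorem fExt_eq_f {x : ℝ} (hx : x ∈ Ioo 0 S.T) : S.fExt x = S.f x := by
  rw [fExt, f, projIcc_of_mem _ (Ioo_subset_Icc_self hx), S.muExt_of_nonneg hx.1.le,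
    derivWithin_of_mem_nhds (Icc_mem_nhds hx.1 hx.2)]

theorem continuous_survExt (t : ℝ) : Continuous (S.survExt t) := by
  have h := S.continuous_muExt.comp (continuous_const_add t)
  exact Real.continuous_exp.comp
    (intervalIntegral.continuous_primitive (fun a b => h.intervalIntegrable a b) 0).neg

theorem survExt_eq_surv {t s : ℝ} (ht : 0 ≤ t) (hs : 0 ≤ s) : S.survExt t s = S.surv t s := by
  refine congrArg (fun I => Real.exp (-I)) (intervalIntegral.integral_congr fun u hu => ?_)
  rw [uIcc_of_le hs] at hu
  exact S.muExt_of_nonneg (by linarith [hu.1])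

theorem continuous_discount (t : ℝ) : Continuous (S.discount t) :=
  (Real.continuous_exp.comp (continuous_const.mul continuous_id)).mul (S.continuous_survExt t)

theorem discount_pos (t s : ℝ) : 0 < S.discount t s := by
  unfold discount survExt; positivity

theorem continuous_deathDensity (t : ℝ) : Continuous (S.deathDensity t) :=
  (S.continuous_discount t).mul (S.continuous_muExt.comp (continuous_const_add t))

theorem deathDensity_nonneg (t s : ℝ) : 0 ≤ S.deathDensity t s :=
  mul_nonneg (S.discount_pos t s).le (S.muExt_nonneg _)

theorem discount_le_one (t : ℝ) {s : ℝ} (hs : 0 ≤ s) : S.discount t s ≤ 1 := by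
  have hμ : 0 ≤ ∫ u in (0:ℝ)..s, S.muExt (t + u) :=
    intervalIntegral.integral_nonneg hs fun u _ => S.muExt_nonneg _
  rw [discount, survExt, ← Real.exp_add]
  exact Real.exp_le_one_iff.2 (by nlinarith [S.hc])

def runningGain (t u : ℝ) : ℝ := ∫ s in (0:ℝ)..u, S.discount t s * S.fExt (t + s)

theorem continuous_runningGain_integrand (t : ℝ) :
    Continuous fun s => S.discount t s * S.fExt (t + s) :=
  (S.continuous_discount t).mul (S.continuous_fExt.comp (continuous_const_add t))

theorem continuous_runningGain (t : ℝ) : Continuous (S.runningGain t) :=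
  intervalIntegral.continuous_primitive
    (fun a b => (S.continuous_runningGain_integrand t).intervalIntegrable a b) 0

theorem hasDerivAt_runningGain (t u : ℝ) :
    HasDerivAt (S.runningGain t) (S.discount t u * S.fExt (t + u)) u :=
  ((S.continuous_runningGain_integrand t).integral_hasStrictDerivAt 0 u).hasDerivAt

theorem add_mem_Ioo_of_mem_Ioc {t s u : ℝ} (ht : 0 ≤ t) (hs : s ∈ Ioc 0 u) (hu : u ≤ S.T - t)
    (hsT : s ≠ S.T - t) : t + s ∈ Ioo 0 S.T :=
  ⟨by linarith [hs.1], lt_of_le_of_ne (by linarith [hs.2]) fun h => hsT (by linarith)⟩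

theorem runningGain_eq_integral {t u : ℝ} (ht : 0 ≤ t) (hu : u ∈ Icc 0 (S.T - t)) :
    S.runningGain t u = ∫ s in (0:ℝ)..u, Real.exp (-S.c * s) * S.surv t s * S.f (t + s) := by
  refine intervalIntegral.integral_congr_ae ?_
  filter_upwards [compl_mem_ae_iff.2 (measure_singleton (S.T - t))] with s hsT hs
  rw [uIoc_of_le hu.1] at hs
  rw [discount, S.survExt_eq_surv ht hs.1.le, S.fExt_eq_f (S.add_mem_Ioo_of_mem_Ioc ht hs hu.2 hsT)]

theorem runningGain_le_runningGain_tstar (hA2 : S.Assumption2) {t u : ℝ} (ht : 0 ≤ t)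
    (hu : u ∈ Icc 0 (S.T - t)) :
    S.runningGain t u ≤ S.runningGain t (max (S.tstar - t) 0) := by
  set u₀ := max (S.tstar - t) 0
  have hu₀ : u₀ ≤ S.T - t := max_le (by linarith [S.tstar_le_T]) (by linarith [hu.1, hu.2])
  have hderiv : ∀ D s, HasDerivWithinAt (S.runningGain t) (S.discount t s * S.fExt (t + s)) D s :=
    fun _ s => (S.hasDerivAt_runningGain t s).hasDerivWithinAt
  rcases le_total u u₀ with h | h
  · refine monotoneOn_of_hasDerivWithinAt_nonneg (convex_Icc 0 u₀)
      (S.continuous_runningGain t).continuousOn (fun s _ => hderiv _ s) (fun s hs => ?_)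
      ⟨hu.1, h⟩ ⟨hu.1.trans h, le_rfl⟩ h
    rw [interior_Icc] at hs
    have hst : s < S.tstar - t := (lt_max_iff.1 hs.2).resolve_right (not_lt.2 hs.1.le)
    rw [S.fExt_eq_f ⟨by linarith [hs.1], by linarith [S.tstar_le_T]⟩]
    exact mul_nonneg (S.discount_pos t s).le (hA2.1 _ ⟨by linarith [hs.1], by linarith⟩)
  · refine antitoneOn_of_hasDerivWithinAt_nonpos (convex_Icc u₀ (S.T - t))
      (S.continuous_runningGain t).continuousOn (fun s _ => hderiv _ s) (fun s hs => ?_)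
      ⟨le_rfl, hu₀⟩ ⟨h, hu.2⟩ h
    rw [interior_Icc] at hs
    have hst : S.tstar - t < s := (le_max_left _ _).trans_lt hs.1
    have hs₀ : 0 < s := (le_max_right _ _).trans_lt hs.1
    rw [S.fExt_eq_f ⟨by linarith, by linarith [hs.2]⟩]
    exact mul_nonpos_of_nonneg_of_nonpos (S.discount_pos t s).le
      (hA2.2.1 _ ⟨by linarith, by linarith [hs.2]⟩).le

def callPayoff (z s : ℝ) (ω : Ω) : ℝ := max (S.Z z s ω - 1) 0

theorem callPayoff_eq (z s : ℝ) (ω : Ω) : S.callPayoff z s ω = max (z * S.Z 1 s ω - 1) 0 := by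
  rw [callPayoff, S.Z_eq_mul z]

theorem callPayoff_nonneg (z s : ℝ) (ω : Ω) : 0 ≤ S.callPayoff z s ω := le_max_right _ _

theorem callPayoff_le (z s : ℝ) (ω : Ω) : S.callPayoff z s ω ≤ |z| * S.Z 1 s ω := by
  rw [callPayoff_eq]
  exact max_mul_sub_one_le_abs_mul (S.Z_one_pos s ω).le z

theorem continuous_callPayoff (z : ℝ) (ω : Ω) : Continuous fun s => S.callPayoff z s ω :=
  ((S.continuous_Z z ω).sub continuous_const).max continuous_const

theorem measurable_callPayoff (z s : ℝ) : Measurable (S.callPayoff z s) :=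
  ((S.measurable_Z z s).sub_const 1).max measurable_const

theorem convexOn_mul_callPayoff {ρ : ℝ} (hρ : 0 ≤ ρ) (s : ℝ) (ω : Ω) :
    ConvexOn ℝ univ fun z => ρ * S.callPayoff z s ω := by
  simp only [callPayoff_eq]
  exact (convexOn_max_mul_sub_one _).smul hρ

theorem monotone_mul_callPayoff {ρ : ℝ} (hρ : 0 ≤ ρ) (s : ℝ) (ω : Ω) :
    Monotone fun z => ρ * S.callPayoff z s ω := by
  simp only [callPayoff_eq]
  exact (monotone_max_mul_sub_one (S.Z_one_pos s ω).le).const_mul hρ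

/- The `z`-dependent part of the payoff. The running part is integrated over the fixed interval
`(0, T - t]` against the indicator of `s ≤ τ`, which makes it jointly measurable in `ω`. -/
def optionGain (t z : ℝ) (τ : Ω → ℝ) (ω : Ω) : ℝ :=
  (∫ s in Ioc 0 (S.T - t), (Iic (τ ω)).indicator (S.deathDensity t) s * S.callPayoff z s ω) +
    (if τ ω = S.T - t then S.discount t (S.T - t) else 0) * S.callPayoff z (S.T - t) ω

theorem indicator_deathDensity_nonneg (t u s : ℝ) : 0 ≤ (Iic u).indicator (S.deathDensity t) s :=
  indicator_nonneg (fun s _ => S.deathDensity_nonneg t s) s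

theorem ite_discount_nonneg (t : ℝ) (p : Prop) [Decidable p] :
    0 ≤ if p then S.discount t (S.T - t) else 0 := by
  split_ifs
  exacts [(S.discount_pos t _).le, le_rfl]

theorem indicator_deathDensity_mul_callPayoff (t z u s : ℝ) (ω : Ω) :
    (Iic u).indicator (S.deathDensity t) s * S.callPayoff z s ω =
      (Iic u).indicator (fun s => S.deathDensity t s * S.callPayoff z s ω) s :=
  (indicator_mul_left (Iic u) (S.deathDensity t) fun s => S.callPayoff z s ω).symm

theorem integrableOn_optionGain_integrand (t z : ℝ) (τ : Ω → ℝ) (ω : Ω) :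
    IntegrableOn (fun s => (Iic (τ ω)).indicator (S.deathDensity t) s * S.callPayoff z s ω)
      (Ioc 0 (S.T - t)) := by
  simp only [indicator_deathDensity_mul_callPayoff]
  exact ((S.continuous_deathDensity t).mul (S.continuous_callPayoff z ω)).integrableOn_Ioc.indicator
    measurableSet_Iic

theorem optionGain_nonneg (t z : ℝ) (τ : Ω → ℝ) (ω : Ω) : 0 ≤ S.optionGain t z τ ω :=
  add_nonneg
    (integral_nonneg fun s =>
      mul_nonneg (S.indicator_deathDensity_nonneg t _ s) (S.callPayoff_nonneg z s ω))
    (mul_nonneg (S.ite_discount_nonneg t _) (S.callPayoff_nonneg _ _ ω))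

theorem convexOn_optionGain (t : ℝ) (τ : Ω → ℝ) (ω : Ω) :
    ConvexOn ℝ univ fun z => S.optionGain t z τ ω :=
  (convexOn_integral convex_univ
    (ae_of_all _ fun s => S.convexOn_mul_callPayoff (S.indicator_deathDensity_nonneg t _ s) s ω)
    fun z _ => S.integrableOn_optionGain_integrand t z τ ω).add
    (S.convexOn_mul_callPayoff (S.ite_discount_nonneg t _) _ ω)

theorem monotone_optionGain (t : ℝ) (τ : Ω → ℝ) (ω : Ω) :
    Monotone fun z => S.optionGain t z τ ω :=
  (monotone_integral
    (ae_of_all _ fun s => S.monotone_mul_callPayoff (S.indicator_deathDensity_nonneg t _ s) s ω)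
    fun z => S.integrableOn_optionGain_integrand t z τ ω).add
    (S.monotone_mul_callPayoff (S.ite_discount_nonneg t _) _ ω)

theorem measurable_optionGain (t z : ℝ) {τ : Ω → ℝ} (hτ : Measurable τ) :
    Measurable (S.optionGain t z τ) := by
  have hjoint : Measurable fun p : Ω × ℝ =>
      (Iic (τ p.1)).indicator (S.deathDensity t) p.2 * S.callPayoff z p.2 p.1 := by
    simp only [indicator_apply, mem_Iic]
    exact (Measurable.ite (measurableSet_le measurable_snd (hτ.comp measurable_fst))
      ((S.continuous_deathDensity t).measurable.comp measurable_snd) measurable_const).mul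
      (((S.measurable_Z_uncurry z).sub_const 1).max measurable_const)
  exact hjoint.stronglyMeasurable.integral_prod_right'.measurable.add
    ((Measurable.ite (hτ (measurableSet_singleton _)) measurable_const measurable_const).mul
      (S.measurable_callPayoff z _))

theorem exists_optionGain_le {t : ℝ} (ht : t ≤ S.T) :
    ∃ D : Ω → ℝ, Integrable D S.P ∧ ∀ z τ ω, S.optionGain t z τ ω ≤ |z| * D ω := by
  obtain ⟨M, hM⟩ := (isCompact_Icc (a := 0) (b := S.T - t)).bddAbove_image
    (S.continuous_deathDensity t).continuousOn
  refine ⟨fun ω => M * (∫ s in Ioc 0 (S.T - t), S.Z 1 s ω) + S.Z 1 (S.T - t) ω,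
    ((S.integrable_setIntegral_Z _).const_mul M).add (S.integrable_Z (sub_nonneg.2 ht) 1),
    fun z τ ω => ?_⟩
  have hrun : (∫ s in Ioc 0 (S.T - t), (Iic (τ ω)).indicator (S.deathDensity t) s *
      S.callPayoff z s ω) ≤ |z| * (M * ∫ s in Ioc 0 (S.T - t), S.Z 1 s ω) := by
    rw [← integral_const_mul, ← integral_const_mul]
    refine setIntegral_mono_on (S.integrableOn_optionGain_integrand t z τ ω)
      (Continuous.integrableOn_Ioc (by have := S.continuous_Z 1 ω; fun_prop)) measurableSet_Ioc
      fun s hs => ?_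
    have hρ : (Iic (τ ω)).indicator (S.deathDensity t) s ≤ M :=
      (indicator_le_self' (fun s _ => S.deathDensity_nonneg t s) s).trans
        (hM (mem_image_of_mem _ (Ioc_subset_Icc_self hs)))
    calc _ ≤ M * (|z| * S.Z 1 s ω) :=
          mul_le_mul hρ (S.callPayoff_le z s ω) (S.callPayoff_nonneg z s ω)
            ((S.indicator_deathDensity_nonneg t _ s).trans hρ)
      _ = |z| * (M * S.Z 1 s ω) := by ring
  have hterm : (if τ ω = S.T - t then S.discount t (S.T - t) else 0) *
      S.callPayoff z (S.T - t) ω ≤ |z| * S.Z 1 (S.T - t) ω :=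
    calc _ ≤ 1 * (|z| * S.Z 1 (S.T - t) ω) :=
          mul_le_mul (by split_ifs; exacts [S.discount_le_one t (sub_nonneg.2 ht), zero_le_one])
            (S.callPayoff_le z _ ω) (S.callPayoff_nonneg z _ ω) zero_le_one
      _ = |z| * S.Z 1 (S.T - t) ω := one_mul _
  calc S.optionGain t z τ ω ≤ _ + _ := add_le_add hrun hterm
    _ = _ := by ring

theorem payoff_eq {t : ℝ} (ht : 0 ≤ t) {τ : Ω → ℝ} {ω : Ω} (hτ : τ ω ∈ Icc 0 (S.T - t))
    (z : ℝ) : S.payoff t z τ ω = S.runningGain t (τ ω) + S.optionGain t z τ ω := by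
  have hcont : Continuous fun s => S.deathDensity t s * S.callPayoff z s ω :=
    (S.continuous_deathDensity t).mul (S.continuous_callPayoff z ω)
  have hsplit : (∫ s in (0:ℝ)..τ ω, Real.exp (-S.c * s) * S.surv t s *
      (S.f (t + s) + S.mu (t + s) * max (S.Z z s ω - 1) 0)) =
      ∫ s in (0:ℝ)..τ ω, (S.discount t s * S.fExt (t + s) +
        S.deathDensity t s * S.callPayoff z s ω) := by
    refine intervalIntegral.integral_congr_ae ?_
    filter_upwards [compl_mem_ae_iff.2 (measure_singleton (S.T - t))] with s hsT hs
    rw [uIoc_of_le hτ.1] at hs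
    have hts := S.add_mem_Ioo_of_mem_Ioc ht hs hτ.2 hsT
    rw [deathDensity, discount, S.survExt_eq_surv ht hs.1.le, S.fExt_eq_f hts,
      S.muExt_of_nonneg hts.1.le, callPayoff]
    ring
  have hstopped : (∫ s in (0:ℝ)..τ ω, S.deathDensity t s * S.callPayoff z s ω) =
      ∫ s in Ioc 0 (S.T - t), (Iic (τ ω)).indicator (S.deathDensity t) s * S.callPayoff z s ω := by
    simp only [indicator_deathDensity_mul_callPayoff]
    rw [setIntegral_indicator measurableSet_Iic, Ioc_inter_Iic, inf_eq_right.2 hτ.2,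
      intervalIntegral.integral_of_le hτ.1]
  rw [payoff, hsplit, intervalIntegral.integral_add
    ((S.continuous_runningGain_integrand t).intervalIntegrable _ _) (hcont.intervalIntegrable _ _),
    hstopped, optionGain, runningGain, add_assoc]
  congr 2
  split_ifs
  · rw [discount, S.survExt_eq_surv ht (by linarith [hτ.1, hτ.2]), callPayoff]
  · rw [zero_mul]

theorem integrable_payoff {t : ℝ} (ht : t ∈ Icc 0 S.T) {τ : Ω → ℝ} (hτ : S.isAdmissible t τ)
    (z : ℝ) : Integrable (S.payoff t z τ) S.P := by
  obtain ⟨D, hD, hle⟩ := S.exists_optionGain_le ht.2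
  obtain ⟨M, hM⟩ := (isCompact_Icc (a := 0) (b := S.T - t)).exists_bound_of_continuousOn
    (S.continuous_runningGain t).continuousOn
  have hrun : Integrable (fun ω => S.runningGain t (τ ω)) S.P :=
    .of_bound ((S.continuous_runningGain t).measurable.comp
      (S.measurable_of_isAdmissible hτ)).aestronglyMeasurable M (ae_of_all _ fun ω => hM _ (hτ.2 ω))
  have hopt : Integrable (S.optionGain t z τ) S.P :=
    (hD.const_mul |z|).mono'
      (S.measurable_optionGain t z (S.measurable_of_isAdmissible hτ)).aestronglyMeasurable
      (ae_of_all _ fun ω =>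
        (Real.norm_of_nonneg (S.optionGain_nonneg t z τ ω)).trans_le (hle z τ ω))
  exact (hrun.add hopt).congr (ae_of_all _ fun ω => (S.payoff_eq ht.1 (hτ.2 ω) z).symm)

theorem exists_integral_payoff_le {t M : ℝ} (ht : t ∈ Icc 0 S.T)
    (hM : ∀ u ∈ Icc 0 (S.T - t), S.runningGain t u ≤ M) :
    ∃ C, ∀ z τ, S.isAdmissible t τ → ∫ ω, S.payoff t z τ ω ∂S.P ≤ M + |z| * C := by
  obtain ⟨D, hD, hle⟩ := S.exists_optionGain_le ht.2
  refine ⟨∫ ω, D ω ∂S.P, fun z τ hτ => ?_⟩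
  calc ∫ ω, S.payoff t z τ ω ∂S.P ≤ ∫ ω, (M + |z| * D ω) ∂S.P :=
        integral_mono (S.integrable_payoff ht hτ z) ((integrable_const M).add (hD.const_mul _))
          fun ω => by
            rw [S.payoff_eq ht.1 (hτ.2 ω)]
            exact add_le_add (hM _ (hτ.2 ω)) (hle z τ ω)
    _ = M + |z| * ∫ ω, D ω ∂S.P := by
        rw [integral_add (integrable_const M) (hD.const_mul _), integral_const_mul]
        simp

theorem runningGain_le_integral_payoff {t u : ℝ} (ht : t ∈ Icc 0 S.T)
    (hu : u ∈ Icc 0 (S.T - t)) (z : ℝ) :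
    S.runningGain t u ≤ ∫ ω, S.payoff t z (fun _ => u) ω ∂S.P := by
  calc S.runningGain t u = ∫ _, S.runningGain t u ∂S.P := by simp
    _ ≤ _ := integral_mono (integrable_const _)
        (S.integrable_payoff ht (S.isAdmissible_const hu) z) fun ω => by
          rw [S.payoff_eq ht.1 hu]
          exact le_add_of_nonneg_right (S.optionGain_nonneg t z _ ω)

theorem le_integral_payoff_terminal {t : ℝ} (ht : t ∈ Icc 0 S.T) (z : ℝ) :
    S.runningGain t (S.T - t) +
        S.discount t (S.T - t) * (z * Real.exp (S.alpha * (S.T - t)) - 1) ≤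
      ∫ ω, S.payoff t z (fun _ => S.T - t) ω ∂S.P := by
  have hT : S.T - t ∈ Icc 0 (S.T - t) := ⟨sub_nonneg.2 ht.2, le_rfl⟩
  have hZ := S.integrable_Z hT.1 z
  have hZ' : Integrable (fun ω => S.discount t (S.T - t) * (S.Z z (S.T - t) ω - 1)) S.P :=
    (hZ.sub (integrable_const 1)).const_mul _
  calc _ = ∫ ω, (S.runningGain t (S.T - t) + S.discount t (S.T - t) * (S.Z z (S.T - t) ω - 1))
        ∂S.P := by
        rw [integral_add (integrable_const _) hZ', integral_const_mul,
          integral_sub hZ (integrable_const 1), S.integral_Z hT.1]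
        simp
    _ ≤ _ := integral_mono ((integrable_const _).add hZ')
        (S.integrable_payoff ht (S.isAdmissible_const hT) z) fun ω => by
          rw [S.payoff_eq ht.1 hT, optionGain, if_pos rfl]
          gcongr
          refine le_add_of_nonneg_of_le (integral_nonneg fun s => mul_nonneg
            (S.indicator_deathDensity_nonneg t _ s) (S.callPayoff_nonneg z s ω)) ?_
          exact mul_le_mul_of_nonneg_left (le_max_left _ _) (S.discount_pos t _).le

theorem w_eq_iSup (t z : ℝ) :
    S.w t z = ⨆ τ : {τ // S.isAdmissible t τ}, ∫ ω, S.payoff t z τ ω ∂S.P := by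
  rw [w, iSup]
  congr 1
  ext x
  simp [eq_comm]

theorem bddAbove_range_integral_payoff {t : ℝ} (ht : t ∈ Icc 0 S.T) (z : ℝ) :
    BddAbove (range fun τ : {τ // S.isAdmissible t τ} => ∫ ω, S.payoff t z τ ω ∂S.P) := by
  obtain ⟨M, hM⟩ := (isCompact_Icc (a := 0) (b := S.T - t)).bddAbove_image
    (S.continuous_runningGain t).continuousOn
  obtain ⟨C, hC⟩ := S.exists_integral_payoff_le ht fun u hu => hM (mem_image_of_mem _ hu)
  exact ⟨M + |z| * C, forall_mem_range.2 fun τ => hC z τ τ.2⟩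

theorem integral_payoff_le_w {t : ℝ} (ht : t ∈ Icc 0 S.T) {τ : Ω → ℝ}
    (hτ : S.isAdmissible t τ) (z : ℝ) : ∫ ω, S.payoff t z τ ω ∂S.P ≤ S.w t z := by
  rw [w_eq_iSup]
  exact le_ciSup (S.bddAbove_range_integral_payoff ht z) ⟨τ, hτ⟩

theorem monotone_w {t : ℝ} (ht : t ∈ Icc 0 S.T) : Monotone (S.w t) := by
  rw [show S.w t = _ from funext (S.w_eq_iSup t)]
  refine monotone_ciSup (fun τ => monotone_integral (ae_of_all _ fun ω => ?_)
    (S.integrable_payoff ht τ.2)) (S.bddAbove_range_integral_payoff ht)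
  simp only [S.payoff_eq ht.1 (τ.2.2 ω)]
  exact (S.monotone_optionGain t τ ω).const_add _

theorem convexOn_w {t : ℝ} (ht : t ∈ Icc 0 S.T) : ConvexOn ℝ univ (S.w t) := by
  have : Nonempty {τ // S.isAdmissible t τ} :=
    ⟨⟨_, S.isAdmissible_const ⟨le_rfl, sub_nonneg.2 ht.2⟩⟩⟩
  rw [show S.w t = _ from funext (S.w_eq_iSup t)]
  refine convexOn_ciSup convex_univ (fun τ => convexOn_integral convex_univ
    (ae_of_all _ fun ω => ?_) fun z _ => S.integrable_payoff ht τ.2 z)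
    fun z _ => S.bddAbove_range_integral_payoff ht z
  simp only [S.payoff_eq ht.1 (τ.2.2 ω)]
  exact (convexOn_const _ convex_univ).add (S.convexOn_optionGain t τ ω)

theorem tendsto_w_atTop {t : ℝ} (ht : t ∈ Icc 0 S.T) : Tendsto (S.w t) atTop atTop := by
  refine tendsto_atTop_mono (fun z => (S.le_integral_payoff_terminal ht z).trans
    (S.integral_payoff_le_w ht (S.isAdmissible_const ⟨sub_nonneg.2 ht.2, le_rfl⟩) z)) ?_
  refine tendsto_atTop_add_const_left _ _ (Tendsto.const_mul_atTop (S.discount_pos t _) ?_)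
  simpa only [sub_eq_add_neg, id] using tendsto_atTop_add_const_right _ (-1)
    (tendsto_id.atTop_mul_const (Real.exp_pos (S.alpha * (S.T - t))))

theorem tendsto_w_nhds_zero (hA2 : S.Assumption2) {t : ℝ} (ht : t ∈ Icc 0 S.T) :
    Tendsto (S.w t) (𝓝 0) (𝓝 (S.runningGain t (max (S.tstar - t) 0))) := by
  have hu₀ : max (S.tstar - t) 0 ∈ Icc 0 (S.T - t) :=
    ⟨le_max_right _ _, max_le (by linarith [S.tstar_le_T]) (sub_nonneg.2 ht.2)⟩
  obtain ⟨C, hC⟩ := S.exists_integral_payoff_le ht fun u hu =>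
    S.runningGain_le_runningGain_tstar hA2 ht.1 hu
  have hupper : Tendsto (fun z => S.runningGain t (max (S.tstar - t) 0) + |z| * C) (𝓝 0)
      (𝓝 (S.runningGain t (max (S.tstar - t) 0))) := by
    have hcont : Continuous fun z : ℝ => S.runningGain t (max (S.tstar - t) 0) + |z| * C := by
      fun_prop
    simpa using hcont.tendsto 0
  have : Nonempty {τ // S.isAdmissible t τ} := ⟨⟨_, S.isAdmissible_const hu₀⟩⟩
  refine tendsto_of_tendsto_of_tendsto_of_le_of_le tendsto_const_nhds hupper
    (fun z => (S.runningGain_le_integral_payoff ht hu₀ z).trans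
      (S.integral_payoff_le_w ht (S.isAdmissible_const hu₀) z)) fun z => ?_
  rw [w_eq_iSup]
  exact ciSup_le fun τ => hC z τ τ.2

end VASetting

/-- Lemma 4.2: monotonicity, convexity, growth at infinity and the
limit at zero of `z ↦ w(t,z)`. -/
theorem w_monotone_convex_and_limits
    {Ω : Type*} [mΩ : MeasurableSpace Ω] (S : VASetting Ω) (hA2 : S.Assumption2) :
    ∀ t ∈ Set.Icc (0:ℝ) S.T,
      MonotoneOn (fun z => S.w t z) (Set.Ioi 0) ∧
      ConvexOn ℝ (Set.Ioi 0) (fun z => S.w t z) ∧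
      Filter.Tendsto (fun z => S.w t z) Filter.atTop Filter.atTop ∧
      Filter.Tendsto (fun z => S.w t z) (nhdsWithin (0:ℝ) (Set.Ioi 0))
        (nhds (if t < S.tstar then
          ∫ s in (0:ℝ)..(S.tstar - t), Real.exp (-S.c * s) * S.surv t s * S.f (t + s)
        else 0)) := by
  intro t ht
  have hlim : (if t < S.tstar then
      ∫ s in (0:ℝ)..(S.tstar - t), Real.exp (-S.c * s) * S.surv t s * S.f (t + s) else 0) =
      S.runningGain t (max (S.tstar - t) 0) := by
    split_ifs with h
    · rw [max_eq_left (by linarith), S.runningGain_eq_integral ht.1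
        ⟨by linarith, by linarith [S.tstar_le_T]⟩]
    · rw [max_eq_right (by linarith), VASetting.runningGain, intervalIntegral.integral_same]
  rw [hlim]
  exact ⟨(S.monotone_w ht).monotoneOn _, (S.convexOn_w ht).subset (subset_univ _) (convex_Ioi 0),
    S.tendsto_w_atTop ht, (S.tendsto_w_nhds_zero hA2 ht).mono_left nhdsWithin_le_nhds⟩
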